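/- Let n ≥ 3 and let D_{2n} act on the free metabelian Lie algebra L_2 on u, v by ρ: u ↦ ξu, v ↦ ξ̄v (ξ = e^{2πi/n}) and τ: u ↔ v. Then the module of invariants (L_2')^{D_{2n}} is a free module of rank 1 over C[u,v]^{D_{2n}} = C[uv, u^n+v^n], freely generated by the element [v,u](ad^n(u) − ad^n(v)). -/

import Mathlib

/-!
Through `Φ`, the rotation `ρ` acts on `ℂ[u,v]` by the diagonal scaling `u ↦ ξu, v ↦ ξ⁻¹v`
(as `ξ̄ = ξ⁻¹` and `ρ[v,u] = [v,u]`), and `τ` by minus the swap of the variables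
(as `τ[v,u] = -[v,u]`). So the invariants of `L₂'` correspond to polynomials `f` whose monomials
`uᵃvᵇ` all have `a ≡ b (mod n)` and with `f(v,u) = -f(u,v)`. Such an `f` is a combination of the
binomials `uᵃvᵇ - uᵇvᵃ = (uv)ᵇ(u^{nk} - v^{nk})`, and `xᵏ - yᵏ = (x - y) q` with `q` a polynomial
in `x + y` and `xy`; for `x = uⁿ`, `y = vⁿ` this writes `f = p (uⁿ - vⁿ)` with `p ∈ ℂ[uv, uⁿ+vⁿ]`.
-/

open MvPolynomial

/-- The ideal of the free Lie algebra on two generators defining the free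
metabelian Lie algebra. -/
noncomputable def metabelianLieIdeal :
    LieIdeal ℂ (FreeLieAlgebra ℂ (Fin 2)) :=
  LieSubmodule.lieSpan ℂ (FreeLieAlgebra ℂ (Fin 2))
    {x | ∃ a b c d : FreeLieAlgebra ℂ (Fin 2), x = ⁅⁅a, b⁆, ⁅c, d⁆⁆}

/-- The free metabelian Lie algebra on two generators over `ℂ`. -/
abbrev FreeMetabelianLie2 : Type := FreeLieAlgebra ℂ (Fin 2) ⧸ metabelianLieIdeal

noncomputable def uLie : FreeMetabelianLie2 :=
  LieSubmodule.Quotient.mk' metabelianLieIdeal (FreeLieAlgebra.of ℂ 0)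

noncomputable def vLie : FreeMetabelianLie2 :=
  LieSubmodule.Quotient.mk' metabelianLieIdeal (FreeLieAlgebra.of ℂ 1)

variable {R : Type*} [CommRing R]

theorem Subalgebra.exists_pow_sub_pow_eq_mul_sub {A : Type*} [CommRing A] [Algebra R A]
    (S : Subalgebra R A) {a b : A} (hadd : a + b ∈ S) (hmul : a * b ∈ S) (k : ℕ) :
    ∃ q ∈ S, a ^ k - b ^ k = q * (a - b) := by
  induction k using Nat.twoStepInduction with
  | zero => exact ⟨0, S.zero_mem, by simp⟩
  | one => exact ⟨1, S.one_mem, by simp⟩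
  | more k ih₀ ih₁ =>
    obtain ⟨q₀, hq₀, h₀⟩ := ih₀
    obtain ⟨q₁, hq₁, h₁⟩ := ih₁
    refine ⟨(a + b) * q₁ - a * b * q₀, S.sub_mem (S.mul_mem hadd hq₁) (S.mul_mem hmul hq₀), ?_⟩
    linear_combination (a + b) * h₁ - a * b * h₀

variable (R) in
noncomputable def basicInvariantAlgebra (n : ℕ) : Subalgebra R (MvPolynomial (Fin 2) R) :=
  Algebra.adjoin R {X 0 * X 1, X 0 ^ n + X 1 ^ n}

variable (R) in
noncomputable def diffPowMultiples (n : ℕ) : Submodule R (MvPolynomial (Fin 2) R) :=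
  (basicInvariantAlgebra R n).toSubmodule.map (LinearMap.mulRight R (X 0 ^ n - X 1 ^ n))

theorem X_mul_X_mem_basicInvariantAlgebra (n : ℕ) :
    X 0 * X 1 ∈ basicInvariantAlgebra R n :=
  Algebra.subset_adjoin (Set.mem_insert _ _)

theorem X_pow_add_X_pow_mem_basicInvariantAlgebra (n : ℕ) :
    X 0 ^ n + X 1 ^ n ∈ basicInvariantAlgebra R n :=
  Algebra.subset_adjoin (Set.mem_insert_of_mem _ rfl)

theorem X_pow_mul_X_pow_sub_mem_diffPowMultiples {n a b : ℕ} (h : a ≡ b [MOD n]) :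
    (X 0 ^ a * X 1 ^ b - X 0 ^ b * X 1 ^ a : MvPolynomial (Fin 2) R) ∈ diffPowMultiples R n := by
  wlog hba : b ≤ a generalizing a b
  · simpa using neg_mem (this h.symm (by omega))
  obtain ⟨k, rfl⟩ : ∃ k, a = b + n * k := by
    obtain ⟨k, hk⟩ := (Nat.modEq_iff_dvd' hba).mp h.symm
    exact ⟨k, by omega⟩
  obtain ⟨q, hq, hpow⟩ := (basicInvariantAlgebra R n).exists_pow_sub_pow_eq_mul_sub
    (X_pow_add_X_pow_mem_basicInvariantAlgebra n)
    (mul_pow (X 0 : MvPolynomial (Fin 2) R) (X 1) n ▸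
      pow_mem (X_mul_X_mem_basicInvariantAlgebra n) n) k
  refine ⟨(X 0 * X 1) ^ b * q,
    Subalgebra.mul_mem _ (pow_mem (X_mul_X_mem_basicInvariantAlgebra n) b) hq, ?_⟩
  rw [LinearMap.mulRight_apply]
  linear_combination (-(X 0 * X 1 : MvPolynomial (Fin 2) R) ^ b) * hpow

variable (R) in
noncomputable def swapXY : MvPolynomial (Fin 2) R →ₐ[R] MvPolynomial (Fin 2) R :=
  rename (Equiv.swap 0 1)

@[simp] theorem swapXY_X_zero : swapXY R (X 0) = X 1 := by simp [swapXY]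

@[simp] theorem swapXY_X_one : swapXY R (X 1) = X 0 := by simp [swapXY]

noncomputable def diagScale (a b : R) : MvPolynomial (Fin 2) R →ₐ[R] MvPolynomial (Fin 2) R :=
  aeval ![C a * X 0, C b * X 1]

@[simp] theorem diagScale_X_zero (a b : R) : diagScale a b (X 0) = C a * X 0 := by
  simp [diagScale]

@[simp] theorem diagScale_X_one (a b : R) : diagScale a b (X 1) = C b * X 1 := by
  simp [diagScale]

theorem diagScale_monomial (a b : R) (d : Fin 2 →₀ ℕ) (c : R) :
    diagScale a b (monomial d c) = monomial d (a ^ d 0 * b ^ d 1 * c) := by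
  simp only [monomial_fin_two, map_mul, map_pow, diagScale_X_zero, diagScale_X_one, algHom_C,
    algebraMap_eq]
  ring

theorem coeff_diagScale (a b : R) (f : MvPolynomial (Fin 2) R) (d : Fin 2 →₀ ℕ) :
    coeff d (diagScale a b f) = a ^ d 0 * b ^ d 1 * coeff d f := by
  induction f using MvPolynomial.induction_on' with
  | monomial e c =>
    rw [diagScale_monomial, coeff_monomial, coeff_monomial]
    split_ifs with h
    · rw [h]
    · rw [mul_zero]
  | add p q hp hq => rw [map_add, coeff_add, coeff_add, hp, hq, mul_add]

theorem diagScale_eq_self_of_mem {n : ℕ} {a b : R} (hab : a * b = 1) (ha : a ^ n = 1)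
    {p : MvPolynomial (Fin 2) R} (hp : p ∈ basicInvariantAlgebra R n) : diagScale a b p = p := by
  have hb : b ^ n = 1 := by rw [← one_mul (b ^ n), ← ha, ← mul_pow, hab, one_pow, ha]
  suffices basicInvariantAlgebra R n ≤ (diagScale a b).equalizer (AlgHom.id R _) from this hp
  refine Algebra.adjoin_le ?_
  rintro _ (rfl | rfl)
  · simp only [SetLike.mem_coe, AlgHom.mem_equalizer, map_mul, diagScale_X_zero, diagScale_X_one,
      AlgHom.id_apply]
    rw [mul_mul_mul_comm, ← C_mul, hab, C_1, one_mul]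
  · simp only [SetLike.mem_coe, AlgHom.mem_equalizer, map_add, map_pow, diagScale_X_zero,
      diagScale_X_one, AlgHom.id_apply, mul_pow, ← C_pow, ha, hb, C_1, one_mul]

theorem swapXY_eq_self_of_mem {n : ℕ} {p : MvPolynomial (Fin 2) R}
    (hp : p ∈ basicInvariantAlgebra R n) : swapXY R p = p := by
  suffices basicInvariantAlgebra R n ≤ (swapXY R).equalizer (AlgHom.id R _) from this hp
  refine Algebra.adjoin_le ?_
  rintro _ (rfl | rfl)
  · simp [mul_comm]
  · simp [add_comm]

theorem X_pow_sub_X_pow_ne_zero [Nontrivial R] {n : ℕ} (hn : n ≠ 0) :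
    (X 0 ^ n - X 1 ^ n : MvPolynomial (Fin 2) R) ≠ 0 := fun h => by
  simpa [hn] using congrArg (eval ![1, 0]) h

variable {K : Type*} [Field K]

theorem mem_diffPowMultiples_of_swapXY_eq_neg {n : ℕ} (h2 : (2 : K) ≠ 0)
    {f : MvPolynomial (Fin 2) K} (hmod : ∀ d ∈ f.support, d 0 ≡ d 1 [MOD n])
    (hswap : swapXY K f = -f) : f ∈ diffPowMultiples K n := by
  have hsum : f - swapXY K f = ∑ d ∈ f.support,
      coeff d f • (X 0 ^ d 0 * X 1 ^ d 1 - X 0 ^ d 1 * X 1 ^ d 0) := by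
    conv_lhs => rw [f.as_sum, map_sum, ← Finset.sum_sub_distrib]
    refine Finset.sum_congr rfl fun d _ => ?_
    simp only [monomial_fin_two, map_mul, map_pow, algHom_C, algebraMap_eq, swapXY_X_zero,
      swapXY_X_one, smul_eq_C_mul]
    ring
  have hhalf : f = (2 : K)⁻¹ • (f - swapXY K f) := by
    rw [hswap, sub_neg_eq_add, ← two_smul K f, inv_smul_smul₀ h2]
  rw [hhalf, hsum]
  exact Submodule.smul_mem _ _ <| Submodule.sum_mem _ fun d hd =>
    Submodule.smul_mem _ _ (X_pow_mul_X_pow_sub_mem_diffPowMultiples (hmod d hd))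

theorem IsPrimitiveRoot.modEq_of_diagScale_eq_self {n : ℕ} {ξ : K} (hξ : IsPrimitiveRoot ξ n)
    (hξ0 : ξ ≠ 0) {f : MvPolynomial (Fin 2) K} (hf : diagScale ξ ξ⁻¹ f = f) {d : Fin 2 →₀ ℕ}
    (hd : d ∈ f.support) : d 0 ≡ d 1 [MOD n] := by
  have hpow : ξ ^ d 0 * ξ⁻¹ ^ d 1 = 1 := by
    have := congrArg (coeff d) hf
    rw [coeff_diagScale] at this
    exact mul_right_cancel₀ (mem_support_iff.mp hd) (this.trans (one_mul _).symm)
  rw [Nat.ModEq.comm, ← Int.natCast_modEq_iff, Int.modEq_iff_dvd, ← hξ.zpow_eq_one_iff_dvd,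
    zpow_sub₀ hξ0, zpow_natCast, zpow_natCast, div_eq_mul_inv, ← inv_pow, hpow]

theorem IsPrimitiveRoot.diagScale_eq_self_and_swapXY_eq_neg_iff {n : ℕ} {ξ : K}
    (hξ : IsPrimitiveRoot ξ n) (hn : n ≠ 0) (h2 : (2 : K) ≠ 0) {f : MvPolynomial (Fin 2) K} :
    diagScale ξ ξ⁻¹ f = f ∧ swapXY K f = -f ↔
      ∃ p ∈ basicInvariantAlgebra K n, f = p * (X 0 ^ n - X 1 ^ n) := by
  have hξ0 := hξ.ne_zero hn
  constructor
  · rintro ⟨hscale, hswap⟩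
    obtain ⟨p, hp, hpf⟩ := Submodule.mem_map.mp <| mem_diffPowMultiples_of_swapXY_eq_neg h2
      (fun d hd => hξ.modEq_of_diagScale_eq_self hξ0 hscale hd) hswap
    exact ⟨p, hp, hpf.symm⟩
  · rintro ⟨p, hp, rfl⟩
    constructor
    · rw [map_mul, diagScale_eq_self_of_mem (mul_inv_cancel₀ hξ0) hξ.pow_eq_one hp]
      simp [mul_pow, ← C_pow, inv_pow, hξ.pow_eq_one]
    · rw [map_mul, swapXY_eq_self_of_mem hp, map_sub, map_pow, map_pow, swapXY_X_zero,
        swapXY_X_one]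
      ring

section Lie

variable {L : Type*} [LieRing L] [LieAlgebra R L]

theorem LieHom.map_comp_eq_smul_comp {σ : Type*} {g : σ → L} {Φ : MvPolynomial σ R →ₗ[R] L}
    (hΦ : ∀ i p, Φ (X i * p) = ⁅Φ p, g i⁆) (ψ : L →ₗ⁅R⁆ L)
    (θ : MvPolynomial σ R →ₐ[R] MvPolynomial σ R) (c : R) (h1 : ψ (Φ 1) = c • Φ 1)
    (hθ : ∀ i p, Φ (θ (X i) * p) = ⁅Φ p, ψ (g i)⁆) (p : MvPolynomial σ R) :
    ψ (Φ p) = c • Φ (θ p) := by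
  induction p using MvPolynomial.induction_on with
  | C a => simp only [C_eq_smul_one, map_smul, map_one, h1, smul_comm c a]
  | add p q hp hq => rw [map_add, map_add, hp, hq, map_add, map_add, smul_add]
  | mul_X p i hp =>
    rw [mul_comm p, hΦ, LieHom.map_lie, hp, smul_lie, ← hθ, ← map_mul]

variable {u v : L} {Φ : MvPolynomial (Fin 2) R →ₗ[R] L}

theorem LieHom.map_eq_diagScale (h1 : Φ 1 = ⁅v, u⁆) (hu : ∀ p, Φ (X 0 * p) = ⁅Φ p, u⁆)
    (hv : ∀ p, Φ (X 1 * p) = ⁅Φ p, v⁆) {a b : R} (hab : a * b = 1) (ψ : L →ₗ⁅R⁆ L)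
    (hψu : ψ u = a • u) (hψv : ψ v = b • v) (p : MvPolynomial (Fin 2) R) :
    ψ (Φ p) = Φ (diagScale a b p) := by
  have key := ψ.map_comp_eq_smul_comp (g := ![u, v]) (Fin.forall_fin_two.2 ⟨hu, hv⟩)
    (diagScale a b) 1 ?_ ?_ p
  · rwa [one_smul] at key
  · rw [h1, LieHom.map_lie, hψu, hψv, smul_lie, lie_smul, smul_smul, mul_comm, hab]
  · refine Fin.forall_fin_two.2 ⟨fun q => ?_, fun q => ?_⟩ <;>
      simp [hψu, hψv, hu, hv, ← smul_eq_C_mul]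

theorem LieHom.map_eq_neg_swapXY (h1 : Φ 1 = ⁅v, u⁆) (hu : ∀ p, Φ (X 0 * p) = ⁅Φ p, u⁆)
    (hv : ∀ p, Φ (X 1 * p) = ⁅Φ p, v⁆) (ψ : L →ₗ⁅R⁆ L) (hψu : ψ u = v) (hψv : ψ v = u)
    (p : MvPolynomial (Fin 2) R) : ψ (Φ p) = -Φ (swapXY R p) := by
  have key := ψ.map_comp_eq_smul_comp (g := ![u, v]) (Fin.forall_fin_two.2 ⟨hu, hv⟩)
    (swapXY R) (-1) ?_ ?_ p
  · rwa [neg_one_smul] at key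
  · rw [h1, LieHom.map_lie, hψu, hψv, neg_one_smul, lie_skew]
  · refine Fin.forall_fin_two.2 ⟨fun q => ?_, fun q => ?_⟩ <;> simp [hψu, hψv, hu, hv]

end Lie

/-- For `n ≥ 3`, the `D_{2n}`-invariants of the commutator ideal `L₂'` of the
free metabelian Lie algebra form a free rank-one module over
`ℂ[u,v]^{D_{2n}} = ℂ[uv, uⁿ+vⁿ]` generated by `[v,u](adⁿ(u) − adⁿ(v))`:
identifying `L₂'` with `ℂ[u,v]` via `Φ` (with `Φ(f) = [v,u]f(ad u, ad v)`),
an element `w ∈ L₂'` is `ρ`- and `τ`-invariant iff `w = Φ(p·(uⁿ − vⁿ))` for a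
unique `p ∈ ℂ[uv, uⁿ+vⁿ]`. -/
theorem freeMetabelianLie_invariants_free (n : ℕ) (hn : 3 ≤ n)
    (ξ : ℂ) (hξ : ξ = Complex.exp (2 * Real.pi * Complex.I / n))
    (ρL τL : FreeMetabelianLie2 →ₗ⁅ℂ⁆ FreeMetabelianLie2)
    (hρu : ρL uLie = ξ • uLie) (hρv : ρL vLie = (starRingEnd ℂ) ξ • vLie)
    (hτu : τL uLie = vLie) (hτv : τL vLie = uLie)
    (Φ : MvPolynomial (Fin 2) ℂ →ₗ[ℂ] FreeMetabelianLie2)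
    (hinj : Function.Injective Φ)
    (h1 : Φ 1 = ⁅vLie, uLie⁆)
    (hu : ∀ p, Φ (X 0 * p) = ⁅Φ p, uLie⁆)
    (hv : ∀ p, Φ (X 1 * p) = ⁅Φ p, vLie⁆)
    (hrange : LinearMap.range Φ =
      LieSubmodule.toSubmodule
        (⁅(⊤ : LieIdeal ℂ FreeMetabelianLie2),
          (⊤ : LieIdeal ℂ FreeMetabelianLie2)⁆ :
          LieIdeal ℂ FreeMetabelianLie2)) :
    ∀ w : FreeMetabelianLie2,
      (w ∈ LieSubmodule.toSubmodule
          (⁅(⊤ : LieIdeal ℂ FreeMetabelianLie2),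
            (⊤ : LieIdeal ℂ FreeMetabelianLie2)⁆ :
            LieIdeal ℂ FreeMetabelianLie2) ∧
        ρL w = w ∧ τL w = w) ↔
      ∃! p : MvPolynomial (Fin 2) ℂ,
        p ∈ Algebra.adjoin ℂ
            ({X 0 * X 1, X 0 ^ n + X 1 ^ n} : Set (MvPolynomial (Fin 2) ℂ)) ∧
        w = Φ (p * (X 0 ^ n - X 1 ^ n)) := by
  have hn0 : n ≠ 0 := by omega
  have hprim : IsPrimitiveRoot ξ n := hξ ▸ Complex.isPrimitiveRoot_exp n hn0
  have hconj : starRingEnd ℂ ξ = ξ⁻¹ := (Complex.inv_eq_conj (hprim.norm'_eq_one hn0)).symm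
  have hρ := ρL.map_eq_diagScale h1 hu hv (mul_inv_cancel₀ (hprim.ne_zero hn0)) hρu
    (hconj ▸ hρv)
  have hτ := τL.map_eq_neg_swapXY h1 hu hv hτu hτv
  have hchar (f : MvPolynomial (Fin 2) ℂ) :=
    hprim.diagScale_eq_self_and_swapXY_eq_neg_iff hn0 two_ne_zero (f := f)
  intro w
  rw [← hrange]
  constructor
  · rintro ⟨⟨f, rfl⟩, hρf, hτf⟩
    obtain ⟨p, hp, rfl⟩ := (hchar f).mp ⟨hinj (hρf ▸ (hρ f).symm),
      hinj (by rw [map_neg, ← hτf, hτ, neg_neg])⟩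
    exact ⟨p, ⟨hp, rfl⟩, fun q hq => mul_right_cancel₀ (X_pow_sub_X_pow_ne_zero hn0)
      (hinj hq.2.symm)⟩
  · rintro ⟨p, ⟨hp, rfl⟩, -⟩
    obtain ⟨hscale, hswap⟩ := (hchar _).mpr ⟨p, hp, rfl⟩
    exact ⟨⟨_, rfl⟩, by rw [hρ, hscale], by rw [hτ, hswap, map_neg, neg_neg]⟩
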